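/- Let p ∈ ℕ, let E = EuclideanSpace ℝ (Fin p), let L > 0, and let S : E → E be L-Lipschitz. Let t ∈ ℝ satisfy 0 ≤ t, t ≤ 1 and t ≤ 1/(12·L). Let γ_p denote the standard Gaussian measure on E. Then, writing a_t(a₀, z) := Real.exp t • a₀ + (2·(Real.exp t − 1)) • S a₀ + Real.sqrt (Real.exp t − 1) • z, the following inequality of Lebesgue integrals (with values in [0,∞]) holds: ∫∫ ‖S (a_t(a₀,z)) − S a₀‖² dγ_p(a₀) dγ_p(z) ≤ 36·p·L²·t·(1 + t) + 72·L²·t² · ∫∫ ‖S (a_t(a₀,z))‖² dγ_p(a₀) dγ_p(z). -/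

import Mathlib

open MeasureTheory ProbabilityTheory

/-- The standard Gaussian measure on `EuclideanSpace ℝ (Fin p)`, i.e. the product over the `p`
coordinates of the real Gaussian measure with mean `0` and variance `1`. -/
noncomputable def stdGaussian (p : ℕ) : Measure (EuclideanSpace ℝ (Fin p)) :=
  Measure.map (MeasurableEquiv.toLp 2 (Fin p → ℝ))
    (Measure.pi fun _ : Fin p => gaussianReal 0 1)

/-!
Write `m = eᵗ - 1 ∈ [0, 2t]`, so that `a_t - a₀ = m a₀ + 2m S(a₀) + √m z`. By the Lipschitz
bound, `X = ‖S a_t - S a₀‖` is at most `L‖a_t - a₀‖`, and `‖S a₀‖ ≤ ‖S a_t‖ + X`; since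
`2Lm ≤ 1/3`, the resulting `X` on the right is absorbed into the left. Squaring with weights
`1/4, 1/2, 1/4` gives the pointwise bound
`X² ≤ 36 L²t² ‖a₀‖² + 18 L²t ‖z‖² + 72 L²t² ‖S a_t‖²`,
and integrating against `E‖a₀‖² = E‖z‖² = p` gives the claim.
-/

open scoped NNReal ENNReal

lemma integral_sq_gaussianReal (μ : ℝ) (v : ℝ≥0) :
    ∫ x, x ^ 2 ∂gaussianReal μ v = μ ^ 2 + v := by
  have h := variance_eq_sub (memLp_id_gaussianReal (μ := μ) (v := v) 2)
  simp only [variance_id_gaussianReal, Pi.pow_apply, id_eq, integral_id_gaussianReal] at h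
  linarith

lemma lintegral_sq_gaussianReal (μ : ℝ) (v : ℝ≥0) :
    ∫⁻ x, ENNReal.ofReal (x ^ 2) ∂gaussianReal μ v = ENNReal.ofReal (μ ^ 2 + v) := by
  have hint : Integrable (fun x : ℝ => x ^ 2) (gaussianReal μ v) :=
    (memLp_id_gaussianReal 2).integrable_sq
  rw [← integral_sq_gaussianReal, ofReal_integral_eq_lintegral_ofReal hint
    (Filter.Eventually.of_forall fun x => sq_nonneg x)]

lemma lintegral_norm_sq_stdGaussian (E : Type*) [NormedAddCommGroup E] [InnerProductSpace ℝ E]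
    [FiniteDimensional ℝ E] [MeasurableSpace E] [BorelSpace E] :
    ∫⁻ x, ENNReal.ofReal (‖x‖ ^ 2) ∂ProbabilityTheory.stdGaussian E = Module.finrank ℝ E := by
  have hnorm (x : Fin (Module.finrank ℝ E) → ℝ) :
      ‖∑ i, x i • stdOrthonormalBasis ℝ E i‖ ^ 2 = ∑ i, x i ^ 2 := by
    have h := (stdOrthonormalBasis ℝ E).sum_repr_symm (WithLp.toLp 2 x)
    simp only at h
    rw [h, LinearIsometryEquiv.norm_map, EuclideanSpace.real_norm_sq_eq]
  rw [ProbabilityTheory.stdGaussian, lintegral_map (by fun_prop) (by fun_prop)]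
  simp_rw [hnorm, ENNReal.ofReal_sum_of_nonneg fun i _ => sq_nonneg _]
  rw [lintegral_finsetSum _ fun i _ => by fun_prop]
  simp_rw [fun i => (measurePreserving_eval (fun _ => gaussianReal 0 1) i).lintegral_comp
    (f := fun x : ℝ => ENNReal.ofReal (x ^ 2)) (by fun_prop), lintegral_sq_gaussianReal]
  simp

lemma stdGaussian_eq (p : ℕ) :
    stdGaussian p = ProbabilityTheory.stdGaussian (EuclideanSpace ℝ (Fin p)) :=
  map_pi_eq_stdGaussian

instance (p : ℕ) : IsProbabilityMeasure (stdGaussian p) :=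
  stdGaussian_eq p ▸ inferInstance

lemma lintegral_ofReal_mul_norm_sq_stdGaussian (p : ℕ) {c : ℝ} (hc : 0 ≤ c) :
    ∫⁻ x, ENNReal.ofReal (c * ‖x‖ ^ 2) ∂stdGaussian p = ENNReal.ofReal (c * p) := by
  simp_rw [ENNReal.ofReal_mul hc]
  rw [lintegral_const_mul' _ _ ENNReal.ofReal_ne_top, stdGaussian_eq,
    lintegral_norm_sq_stdGaussian, finrank_euclideanSpace_fin, ENNReal.ofReal_natCast]

lemma lintegral_lintegral_le_add_add_mul {α β : Type*} [MeasurableSpace α] [MeasurableSpace β]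
    {μ : Measure α} {ν : Measure β} [IsProbabilityMeasure μ] [IsProbabilityMeasure ν]
    {f g : β → α → ℝ≥0∞} {u : α → ℝ≥0∞} {v : β → ℝ≥0∞} {c : ℝ≥0∞}
    (hu : Measurable u) (hv : Measurable v) (hc : c ≠ ∞)
    (h : ∀ z a, f z a ≤ u a + v z + c * g z a) :
    ∫⁻ z, ∫⁻ a, f z a ∂μ ∂ν ≤
      ∫⁻ a, u a ∂μ + ∫⁻ z, v z ∂ν + c * ∫⁻ z, ∫⁻ a, g z a ∂μ ∂ν := by
  have hinner (z : β) :
      ∫⁻ a, f z a ∂μ ≤ ∫⁻ a, u a ∂μ + v z + c * ∫⁻ a, g z a ∂μ :=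
    calc ∫⁻ a, f z a ∂μ ≤ ∫⁻ a, (u a + v z) + c * g z a ∂μ := lintegral_mono (h z)
      _ = _ := by
        rw [lintegral_add_left (hu.add_const _), lintegral_add_left hu, lintegral_const,
          measure_univ, mul_one, lintegral_const_mul' _ _ hc]
  calc ∫⁻ z, ∫⁻ a, f z a ∂μ ∂ν
      ≤ ∫⁻ z, (∫⁻ a, u a ∂μ + v z) + c * ∫⁻ a, g z a ∂μ ∂ν := lintegral_mono hinner
    _ = _ := by
      rw [lintegral_add_left (hv.const_add _), lintegral_add_left measurable_const,
        lintegral_const, measure_univ, mul_one, lintegral_const_mul' _ _ hc]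

section LipschitzStep

variable {E : Type*} [NormedAddCommGroup E] [NormedSpace ℝ E] {S : E → E} {L : ℝ}

/-- The point `a_t(a, z)` reached by one exponential-integrator step from `a` with noise `z`. -/
noncomputable def expIntegratorStep (S : E → E) (t : ℝ) (a z : E) : E :=
  Real.exp t • a + (2 * (Real.exp t - 1)) • S a + Real.sqrt (Real.exp t - 1) • z

lemma sq_norm_sub_le_of_sub_eq (hL : 0 ≤ L) (hS : ∀ a a' : E, ‖S a - S a'‖ ≤ L * ‖a - a'‖)
    {m s : ℝ} (hm : 0 ≤ m) (hs : 0 ≤ s) (hLm : 6 * L * m ≤ 1) {a z A : E}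
    (hA : A - a = m • a + (2 * m) • S a + s • z) :
    ‖S A - S a‖ ^ 2 ≤
      9 * (L * m * ‖a‖) ^ 2 + 18 * (L * m * ‖S A‖) ^ 2 + 9 * (L * s * ‖z‖) ^ 2 := by
  set X := ‖S A - S a‖
  have hSa : ‖S a‖ ≤ ‖S A‖ + X := (norm_le_insert' (S a) (S A)).trans_eq (by rw [norm_sub_rev])
  have hdist : ‖A - a‖ ≤ m * ‖a‖ + 2 * m * ‖S a‖ + s * ‖z‖ := by
    rw [hA]
    refine norm_add₃_le.trans_eq ?_
    rw [norm_smul, norm_smul, norm_smul, Real.norm_of_nonneg hm, Real.norm_of_nonneg hs,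
      Real.norm_of_nonneg (by positivity)]
  have hX : X ≤ L * (m * ‖a‖ + 2 * m * (‖S A‖ + X) + s * ‖z‖) := by
    refine (hS A a).trans (mul_le_mul_of_nonneg_left (hdist.trans ?_) hL)
    gcongr
  have hX' : X ≤ 3 / 2 * (L * m * ‖a‖ + 2 * (L * m * ‖S A‖) + L * s * ‖z‖) := by
    nlinarith [norm_nonneg (S A - S a)]
  calc X ^ 2 ≤ (3 / 2 * (L * m * ‖a‖ + 2 * (L * m * ‖S A‖) + L * s * ‖z‖)) ^ 2 :=
        pow_le_pow_left₀ (norm_nonneg _) hX' 2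
    _ ≤ _ := by
      nlinarith [sq_nonneg (L * m * ‖a‖ + L * s * ‖z‖ - 2 * (L * m * ‖S A‖)),
        sq_nonneg (L * m * ‖a‖ - L * s * ‖z‖)]

lemma sq_norm_expIntegratorStep_sub_le (hL : 0 ≤ L)
    (hS : ∀ a a' : E, ‖S a - S a'‖ ≤ L * ‖a - a'‖) {t : ℝ} (ht0 : 0 ≤ t) (ht1 : t ≤ 1)
    (hLt : 12 * L * t ≤ 1) (a z : E) :
    ‖S (expIntegratorStep S t a z) - S a‖ ^ 2 ≤
      36 * L ^ 2 * t ^ 2 * ‖a‖ ^ 2 + 18 * L ^ 2 * t * ‖z‖ ^ 2 +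
        72 * L ^ 2 * t ^ 2 * ‖S (expIntegratorStep S t a z)‖ ^ 2 := by
  set m := Real.exp t - 1
  have hm0 : 0 ≤ m := sub_nonneg.2 (Real.one_le_exp ht0)
  have hm : m ≤ 2 * t := by
    have h := Real.abs_exp_sub_one_le (x := t) (by rwa [abs_of_nonneg ht0])
    rw [abs_of_nonneg ht0] at h
    exact (le_abs_self m).trans h
  set A := expIntegratorStep S t a z
  have key := sq_norm_sub_le_of_sub_eq hL hS hm0 (Real.sqrt_nonneg m) (by nlinarith)
    (z := z) (A := A) (by simp only [A, expIntegratorStep, m]; module)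
  simp only [mul_pow, Real.sq_sqrt hm0] at key
  calc _ ≤ _ := key
    _ ≤ 9 * (L ^ 2 * (2 * t) ^ 2 * ‖a‖ ^ 2) + 18 * (L ^ 2 * (2 * t) ^ 2 * ‖S A‖ ^ 2) +
        9 * (L ^ 2 * (2 * t) * ‖z‖ ^ 2) := by gcongr
    _ = _ := by ring

end LipschitzStep

theorem stmt2 (p : ℕ) (L : ℝ) (hL : 0 < L)
    (S : EuclideanSpace ℝ (Fin p) → EuclideanSpace ℝ (Fin p))
    (hS : ∀ a a' : EuclideanSpace ℝ (Fin p), ‖S a - S a'‖ ≤ L * ‖a - a'‖)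
    (t : ℝ) (ht0 : 0 ≤ t) (ht1 : t ≤ 1) (ht2 : t ≤ 1 / (12 * L)) :
    (∫⁻ z, ∫⁻ a₀, ENNReal.ofReal
        (‖S (Real.exp t • a₀ + (2 * (Real.exp t - 1)) • S a₀ +
            Real.sqrt (Real.exp t - 1) • z) - S a₀‖ ^ 2)
        ∂(stdGaussian p) ∂(stdGaussian p)) ≤
      ENNReal.ofReal (36 * p * L ^ 2 * t * (1 + t)) +
        ENNReal.ofReal (72 * L ^ 2 * t ^ 2) *
          ∫⁻ z, ∫⁻ a₀, ENNReal.ofReal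
            (‖S (Real.exp t • a₀ + (2 * (Real.exp t - 1)) • S a₀ +
                Real.sqrt (Real.exp t - 1) • z)‖ ^ 2)
            ∂(stdGaussian p) ∂(stdGaussian p) := by
  have hLt : 12 * L * t ≤ 1 := by
    rw [le_div_iff₀ (by positivity)] at ht2
    linarith
  calc _ ≤ ∫⁻ a, ENNReal.ofReal (36 * L ^ 2 * t ^ 2 * ‖a‖ ^ 2) ∂stdGaussian p +
          ∫⁻ z, ENNReal.ofReal (18 * L ^ 2 * t * ‖z‖ ^ 2) ∂stdGaussian p +
          ENNReal.ofReal (72 * L ^ 2 * t ^ 2) *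
            ∫⁻ z, ∫⁻ a, ENNReal.ofReal (‖S (expIntegratorStep S t a z)‖ ^ 2)
              ∂stdGaussian p ∂stdGaussian p :=
        lintegral_lintegral_le_add_add_mul (by fun_prop) (by fun_prop) ENNReal.ofReal_ne_top
          fun z a => by
            rw [← ENNReal.ofReal_mul (by positivity), ← ENNReal.ofReal_add (by positivity)
              (by positivity), ← ENNReal.ofReal_add (by positivity) (by positivity)]
            exact ENNReal.ofReal_le_ofReal
              (sq_norm_expIntegratorStep_sub_le hL.le hS ht0 ht1 hLt a z)
    _ ≤ _ := by
      rw [lintegral_ofReal_mul_norm_sq_stdGaussian p (by positivity),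
        lintegral_ofReal_mul_norm_sq_stdGaussian p (by positivity),
        ← ENNReal.ofReal_add (by positivity) (by positivity)]
      refine add_le_add_left (ENNReal.ofReal_le_ofReal ?_) _
      nlinarith [mul_nonneg (mul_nonneg (Nat.cast_nonneg p) (sq_nonneg L)) ht0]
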